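/- arXiv:2204.04930 — 3 statements merged into one kernel-verified Lean document; each statement's English description precedes it below -/
import Mathlib

section
/- Consider a two-player zero-sum matrix game given by a payoff matrix A : Matrix (Fin m) (Fin n) ℝ, where player 1's mixed strategies are elements of the standard simplex Δ_m ⊆ ℝ^m and player 2's mixed strategies are elements of Δ_n ⊆ ℝ^n, and player 1's payoff at (x, y) is xᵀ A y (player 2's payoff is −xᵀ A y). Let x_1, …, x_T ∈ Δ_m and y_1, …, y_T ∈ Δ_n be sequences of strategies, and let ε ≥ 0. Suppose both players' average regrets are at most ε: sup_{x ∈ Δ_m} (1/T) Σ_{t=1}^T xᵀ A y_t − (1/T) Σ_{t=1}^T x_tᵀ A y_t ≤ ε and (1/T) Σ_{t=1}^T x_tᵀ A y_t − inf_{y ∈ Δ_n} (1/T) Σ_{t=1}^T x_tᵀ A y ≤ ε. Then the average strategy profile (x̄, ȳ), where x̄ = (1/T) Σ_{t=1}^T x_t and ȳ = (1/T) Σ_{t=1}^T y_t, is a 2ε-Nash equilibrium: sup_{x ∈ Δ_m} xᵀ A ȳ − x̄ᵀ A ȳ ≤ 2ε and x̄ᵀ A ȳ − inf_{y ∈ Δ_n}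 x̄ᵀ A y ≤ 2ε. -/
open Matrix

lemma dot_mulVec_sum_right {m n : ℕ} (A : Matrix (Fin m) (Fin n) ℝ) (c : ℝ)
    {T : ℕ} (y : Fin T → (Fin n → ℝ)) (v : Fin m → ℝ) :
    v ⬝ᵥ A.mulVec (c • ∑ t, y t) = c * ∑ t, v ⬝ᵥ A.mulVec (y t) := by
  rw [Matrix.mulVec_smul, dotProduct_smul, smul_eq_mul]
  congr 1
  have : A.mulVec (∑ t, y t) = ∑ t, A.mulVec (y t) := map_sum A.mulVecLin y Finset.univ
  rw [this]
  simp only [dotProduct, Finset.sum_apply, Finset.mul_sum]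
  rw [Finset.sum_comm]

lemma sum_dot_mulVec_left {m n : ℕ} (A : Matrix (Fin m) (Fin n) ℝ) (c : ℝ)
    {T : ℕ} (x : Fin T → (Fin m → ℝ)) (w : Fin n → ℝ) :
    (c • ∑ t, x t) ⬝ᵥ A.mulVec w = c * ∑ t, x t ⬝ᵥ A.mulVec w := by
  rw [smul_dotProduct, smul_eq_mul]
  congr 1
  simp only [dotProduct, Finset.sum_apply, Finset.sum_mul]
  rw [Finset.sum_comm]

lemma avg_mem_stdSimplex {k : ℕ} {T : ℕ} (hT : 0 < T) (x : Fin T → (Fin k → ℝ))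
    (hx : ∀ t, x t ∈ stdSimplex ℝ (Fin k)) :
    (1 / T : ℝ) • ∑ t, x t ∈ stdSimplex ℝ (Fin k) := by
  constructor
  · intro i
    simp only [Pi.smul_apply, Finset.sum_apply, smul_eq_mul]
    apply mul_nonneg (by positivity)
    exact Finset.sum_nonneg fun t _ => (hx t).1 i
  · simp only [Pi.smul_apply, Finset.sum_apply, smul_eq_mul, ← Finset.mul_sum]
    rw [Finset.sum_comm]
    have : ∀ t ∈ Finset.univ, ∑ i, x t i = 1 := fun t _ => (hx t).2
    rw [Finset.sum_congr rfl this]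
    simp [Finset.card_univ, mul_comm]
    field_simp

/-- In a two-player zero-sum matrix game with payoff matrix `A`, if both
players' average regrets over the sequences `x 1, …, x T` and `y 1, …, y T`
are at most `ε`, then the average strategy profile `(x̄, ȳ)` is a
`2ε`-Nash equilibrium. -/
theorem avg_strategies_two_eps_nash
    {m n : ℕ} (A : Matrix (Fin m) (Fin n) ℝ)
    (T : ℕ) (hT : 0 < T)
    (x : Fin T → (Fin m → ℝ)) (y : Fin T → (Fin n → ℝ))
    (hx : ∀ t, x t ∈ stdSimplex ℝ (Fin m))
    (hy : ∀ t, y t ∈ stdSimplex ℝ (Fin n))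
    (ε : ℝ) (hε : 0 ≤ ε)
    (hreg1 : ∀ x' ∈ stdSimplex ℝ (Fin m),
      (1 / T : ℝ) * ∑ t, x' ⬝ᵥ A.mulVec (y t)
        - (1 / T : ℝ) * ∑ t, x t ⬝ᵥ A.mulVec (y t) ≤ ε)
    (hreg2 : ∀ y' ∈ stdSimplex ℝ (Fin n),
      (1 / T : ℝ) * ∑ t, x t ⬝ᵥ A.mulVec (y t)
        - (1 / T : ℝ) * ∑ t, x t ⬝ᵥ A.mulVec y' ≤ ε) :
    (∀ x' ∈ stdSimplex ℝ (Fin m),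
      x' ⬝ᵥ A.mulVec ((1 / T : ℝ) • ∑ t, y t)
        - ((1 / T : ℝ) • ∑ t, x t) ⬝ᵥ A.mulVec ((1 / T : ℝ) • ∑ t, y t)
        ≤ 2 * ε) ∧
    (∀ y' ∈ stdSimplex ℝ (Fin n),
      ((1 / T : ℝ) • ∑ t, x t) ⬝ᵥ A.mulVec ((1 / T : ℝ) • ∑ t, y t)
        - ((1 / T : ℝ) • ∑ t, x t) ⬝ᵥ A.mulVec y'
        ≤ 2 * ε) := by
  have hxbar := avg_mem_stdSimplex hT x hx
  have hybar := avg_mem_stdSimplex hT y hy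
  -- value of the average play
  set V : ℝ := (1 / T : ℝ) * ∑ t, x t ⬝ᵥ A.mulVec (y t) with hV
  -- x̄ᵀ A ȳ ≥ V - ε
  have hlow : V - ((1 / T : ℝ) • ∑ t, x t) ⬝ᵥ A.mulVec ((1 / T : ℝ) • ∑ t, y t) ≤ ε := by
    have := hreg2 _ hybar
    rwa [sum_dot_mulVec_left] at *
  -- x̄ᵀ A ȳ ≤ V + ε
  have hhigh : ((1 / T : ℝ) • ∑ t, x t) ⬝ᵥ A.mulVec ((1 / T : ℝ) • ∑ t, y t) - V ≤ ε := by
    have := hreg1 _ hxbar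
    rwa [dot_mulVec_sum_right] at *
  constructor
  · intro x' hx'
    have h1 := hreg1 x' hx'
    rw [← dot_mulVec_sum_right A (1/T) y x'] at h1
    linarith
  · intro y' hy'
    have h2 := hreg2 y' hy'
    rw [show (1 / T : ℝ) * ∑ t, x t ⬝ᵥ A.mulVec y'
        = ((1 / T : ℝ) • ∑ t, x t) ⬝ᵥ A.mulVec y' from (sum_dot_mulVec_left A _ x y').symm] at h2
    linarith
end

section
/- Let n ≥ 1 be a number of actions and let u^1, …, u^T : Fin n → ℝ be a sequence of payoff vectors such that for each t, max_a u^t(a) − min_a u^t(a) ≤ Δ for some Δ ≥ 0. Define strategies σ^t ∈ Δ_n by regret matching: with cumulative regret R^{t−1}(a) = Σ_{s=1}^{t−1} ( u^s(a) − Σ_b σ^s(b) u^s(b) ) and R^{t−1}_+(a) = max(R^{t−1}(a), 0), set σ^t(a) = R^{t−1}_+(a) / Σ_b R^{t−1}_+(b) if Σ_b R^{t−1}_+(b) > 0 and σ^t(a) = 1/n otherwise. Then for all T ≥ 1 and all actions a, the cumulative regret satisfies R^T(a) ≤ Δ · √n · √T. -/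
/-!
Regret matching plays proportionally to the positive part `R⁺` of the cumulative regret, which
makes the instantaneous regret vector orthogonal to `R⁺` (Blackwell's condition). Hence the
potential `‖R⁺‖²` grows by at most `‖r‖² ≤ nΔ²` per round, since `((x + r)⁺)² ≤ (x⁺ + r)²`; after
`T` rounds `R⁺(a)² ≤ ‖R⁺‖² ≤ TnΔ²`.
-/

noncomputable def regretMatching {ι : Type*} [Fintype ι] (r : ι → ℝ) (a : ι) : ℝ :=
  if 0 < ∑ b, max (r b) 0 then max (r a) 0 / ∑ b, max (r b) 0 else 1 / Fintype.card ι

section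

variable {ι : Type*} [Fintype ι]

lemma regretMatching_nonneg (r : ι → ℝ) (a : ι) : 0 ≤ regretMatching r a := by
  unfold regretMatching
  split_ifs <;> positivity

lemma sum_regretMatching [Nonempty ι] (r : ι → ℝ) : ∑ a, regretMatching r a = 1 := by
  unfold regretMatching
  split_ifs with h
  · rw [← Finset.sum_div, div_self h.ne']
  · simp

lemma sum_posPart_mul_sub_regretMatching (r u : ι → ℝ) :
    ∑ c, max (r c) 0 * (u c - ∑ b, regretMatching r b * u b) = 0 := by
  by_cases h : 0 < ∑ b, max (r b) 0
  · have hmean : ∑ b, regretMatching r b * u b = (∑ b, max (r b) 0 * u b) / ∑ b, max (r b) 0 := by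
      rw [Finset.sum_div]
      refine Finset.sum_congr rfl fun b _ => ?_
      rw [regretMatching, if_pos h, div_mul_eq_mul_div]
    simp only [mul_sub, Finset.sum_sub_distrib, ← Finset.sum_mul, hmean]
    field_simp
    ring
  · have hzero : ∀ c, max (r c) 0 = 0 := fun c =>
      (Finset.sum_eq_zero_iff_of_nonneg fun b _ => le_max_right (r b) 0).mp
        (le_antisymm (not_lt.mp h) (Finset.sum_nonneg fun b _ => le_max_right _ _)) c
        (Finset.mem_univ c)
    simp [hzero]

lemma abs_sub_sum_mul_le {p u : ι → ℝ} {Δ : ℝ} (hp : ∀ b, 0 ≤ p b)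
    (hp1 : ∑ b, p b = 1) (hu : ∀ a b, u a - u b ≤ Δ) (c : ι) :
    |u c - ∑ b, p b * u b| ≤ Δ := by
  have hsplit : u c - ∑ b, p b * u b = ∑ b, p b * (u c - u b) := by
    simp only [mul_sub, Finset.sum_sub_distrib, ← Finset.sum_mul, hp1, one_mul]
  calc |u c - ∑ b, p b * u b| ≤ ∑ b, |p b * (u c - u b)| := hsplit ▸ Finset.abs_sum_le_sum_abs _ _
    _ ≤ ∑ b, p b * Δ := Finset.sum_le_sum fun b _ => by
        rw [abs_mul, abs_of_nonneg (hp b)]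
        exact mul_le_mul_of_nonneg_left (abs_sub_le_iff.mpr ⟨hu c b, hu b c⟩) (hp b)
    _ = Δ := by rw [← Finset.sum_mul, hp1, one_mul]

lemma sq_posPart_add_le (x r : ℝ) : max (x + r) 0 ^ 2 ≤ max x 0 ^ 2 + 2 * max x 0 * r + r ^ 2 := by
  have hx : x ≤ max x 0 := le_max_left x 0
  rcases le_or_gt (x + r) 0 with h | h
  · rw [max_eq_right h]
    nlinarith [sq_nonneg (max x 0 + r)]
  · rw [max_eq_left h.le]
    nlinarith

lemma sum_sq_posPart_add_le {x r : ι → ℝ} {Δ : ℝ} (horth : ∑ c, max (x c) 0 * r c = 0)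
    (hr : ∀ c, |r c| ≤ Δ) :
    ∑ c, max (x c + r c) 0 ^ 2 ≤ ∑ c, max (x c) 0 ^ 2 + Fintype.card ι * Δ ^ 2 := by
  have hsq : ∀ c, r c ^ 2 ≤ Δ ^ 2 := fun c => sq_le_sq.mpr ((hr c).trans (le_abs_self Δ))
  calc ∑ c, max (x c + r c) 0 ^ 2
      ≤ ∑ c, (max (x c) 0 ^ 2 + 2 * (max (x c) 0 * r c) + r c ^ 2) :=
        Finset.sum_le_sum fun c _ => (sq_posPart_add_le _ _).trans_eq (by ring)
    _ = ∑ c, max (x c) 0 ^ 2 + ∑ c, r c ^ 2 := by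
        simp only [Finset.sum_add_distrib, ← Finset.mul_sum, horth, mul_zero, add_zero]
    _ ≤ ∑ c, max (x c) 0 ^ 2 + Fintype.card ι * Δ ^ 2 := by
        grw [Finset.sum_le_sum fun c _ => hsq c]
        simp

variable {R r : ℕ → ι → ℝ} {Δ : ℝ}

lemma sum_sq_posPart_le_of_forall_orthogonal (hR : ∀ t c, R t c = ∑ s ∈ Finset.range t, r s c)
    (horth : ∀ t, ∑ c, max (R t c) 0 * r t c = 0) (hr : ∀ t c, |r t c| ≤ Δ) (T : ℕ) :
    ∑ c, max (R T c) 0 ^ 2 ≤ T * (Fintype.card ι * Δ ^ 2) := by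
  induction T with
  | zero => simp [hR]
  | succ t ih =>
    have hsucc : ∀ c, R (t + 1) c = R t c + r t c := fun c => by
      rw [hR, hR, Finset.sum_range_succ]
    simp only [hsucc]
    push_cast
    linarith [sum_sq_posPart_add_le (horth t) (hr t)]

lemma le_mul_sqrt_mul_sqrt_of_forall_orthogonal (hR : ∀ t c, R t c = ∑ s ∈ Finset.range t, r s c)
    (horth : ∀ t, ∑ c, max (R t c) 0 * r t c = 0) (hr : ∀ t c, |r t c| ≤ Δ) (T : ℕ) (a : ι) :
    R T a ≤ Δ * √(Fintype.card ι) * √T := by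
  have hΔ : 0 ≤ Δ := (abs_nonneg _).trans (hr 0 a)
  have hsq : max (R T a) 0 ^ 2 ≤ (Δ * √(Fintype.card ι) * √T) ^ 2 := by
    rw [mul_pow, mul_pow, Real.sq_sqrt (by positivity), Real.sq_sqrt (by positivity)]
    calc max (R T a) 0 ^ 2 ≤ ∑ c, max (R T c) 0 ^ 2 :=
          Finset.single_le_sum (f := fun c => max (R T c) 0 ^ 2) (fun c _ => sq_nonneg _)
            (Finset.mem_univ a)
      _ ≤ T * (Fintype.card ι * Δ ^ 2) := sum_sq_posPart_le_of_forall_orthogonal hR horth hr T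
      _ = Δ ^ 2 * Fintype.card ι * T := by ring
  calc R T a ≤ max (R T a) 0 := le_max_left _ _
    _ ≤ Δ * √(Fintype.card ι) * √T := (pow_le_pow_iff_left₀ (le_max_right _ _) (by positivity)
        two_ne_zero).mp hsq

end

theorem regret_matching_cumulative_regret_bound_general
    {n : ℕ} (Δ : ℝ)
    (u : ℕ → Fin n → ℝ)
    (hu : ∀ t, ∀ a b : Fin n, u t a - u t b ≤ Δ)
    (σ : ℕ → Fin n → ℝ) (R : ℕ → Fin n → ℝ)
    (hR : ∀ t a, R t a =
      ∑ s ∈ Finset.range t, (u s a - ∑ b, σ s b * u s b))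
    (hσ : ∀ t a, σ t a =
      if 0 < ∑ b, max (R t b) 0
      then max (R t a) 0 / ∑ b, max (R t b) 0
      else 1 / n)
    (T : ℕ) (a : Fin n) :
    R T a ≤ Δ * Real.sqrt n * Real.sqrt T := by
  have : Nonempty (Fin n) := ⟨a⟩
  have hσR : ∀ t, σ t = regretMatching (R t) := fun t =>
    funext fun b => by rw [hσ, regretMatching, Fintype.card_fin]
  have hbound := le_mul_sqrt_mul_sqrt_of_forall_orthogonal hR
    (fun t => by rw [hσR]; exact sum_posPart_mul_sub_regretMatching _ _)
    (fun t c => by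
      rw [hσR]; exact abs_sub_sum_mul_le (regretMatching_nonneg _) (sum_regretMatching _) (hu t) c)
    T a
  rwa [Fintype.card_fin] at hbound

/-- Regret bound for regret matching: if each payoff vector `u t` has range at
most `Δ`, and the strategies `σ t` are chosen by regret matching (proportional
to the positive parts of the cumulative regrets `R t`, uniform if all are
nonpositive), then for all `T ≥ 1` and all actions `a`,
`R T a ≤ Δ * √n * √T`. Here rounds are indexed `0, …, T-1`, so `R t` is the
cumulative regret over the first `t` rounds (i.e. `R^{t-1}` in 1-indexed
notation) and `σ t` depends on `R t`. -/
theorem regret_matching_cumulative_regret_bound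
    {n : ℕ} (hn : 1 ≤ n) (Δ : ℝ) (hΔ : 0 ≤ Δ)
    (u : ℕ → Fin n → ℝ)
    (hu : ∀ t, ∀ a b : Fin n, u t a - u t b ≤ Δ)
    (σ : ℕ → Fin n → ℝ) (R : ℕ → Fin n → ℝ)
    (hR : ∀ t a, R t a =
      ∑ s ∈ Finset.range t, (u s a - ∑ b, σ s b * u s b))
    (hσ : ∀ t a, σ t a =
      if 0 < ∑ b, max (R t b) 0
      then max (R t a) 0 / ∑ b, max (R t b) 0
      else 1 / n)
    (T : ℕ) (hT : 1 ≤ T) (a : Fin n) :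
    R T a ≤ Δ * Real.sqrt n * Real.sqrt T :=
  regret_matching_cumulative_regret_bound_general Δ u hu σ R hR hσ T a
end

section
/- Let n ≥ 1 and let u^1, u^2, … : Fin n → ℝ be an infinite sequence of payoff vectors such that for each t, max_a u^t(a) − min_a u^t(a) ≤ Δ for some Δ ≥ 0, and let σ^t be chosen by regret matching (σ^t proportional to the positive parts of the cumulative regrets R^{t−1}(a) = Σ_{s<t}(u^s(a) − Σ_b σ^s(b) u^s(b)), uniform if all are nonpositive). Then the average regret converges to zero: lim_{T→∞} (max_a R^T(a)) / T = 0, where R^T(a) = Σ_{t=1}^T ( u^t(a) − Σ_b σ^t(b) u^t(b) ). -/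
/-- Average regret of regret matching converges to zero: if each payoff
vector `u t` has range at most `Δ` and the strategies `σ t` are chosen by
regret matching (proportional to the positive parts of the cumulative regrets
`R t`, uniform if all are nonpositive), then `(max_a R T a) / T → 0` as
`T → ∞`. Rounds are indexed `0, …, T-1`, so `R t` is the cumulative regret
over the first `t` rounds and `σ t` depends on `R t`. -/
theorem regret_matching_average_regret_tendsto_zero
    {n : ℕ} (hn : 1 ≤ n) (Δ : ℝ) (hΔ : 0 ≤ Δ)
    (u : ℕ → Fin n → ℝ)
    (hu : ∀ t, ∀ a b : Fin n, u t a - u t b ≤ Δ)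
    (σ : ℕ → Fin n → ℝ) (R : ℕ → Fin n → ℝ)
    (hR : ∀ t a, R t a =
      ∑ s ∈ Finset.range t, (u s a - ∑ b, σ s b * u s b))
    (hσ : ∀ t a, σ t a =
      if 0 < ∑ b, max (R t b) 0
      then max (R t a) 0 / ∑ b, max (R t b) 0
      else 1 / n) :
    Filter.Tendsto (fun T : ℕ => (⨆ a : Fin n, R T a) / (T : ℝ))
      Filter.atTop (nhds 0) := by
  haveI : NeZero n := ⟨by omega⟩
  have hn0 : (0:ℝ) < n := by exact_mod_cast Nat.pos_of_ne_zero (by omega)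
  set c : ℝ := n * Δ ^ 2 with hc
  have hc0 : (0:ℝ) ≤ c := by positivity
  set r : ℕ → Fin n → ℝ := fun t a => u t a - ∑ b, σ t b * u t b with hrdef
  have hRsucc : ∀ t a, R (t + 1) a = R t a + r t a := by
    intro t a
    rw [hR, Finset.sum_range_succ, ← hR]
  have hR0 : ∀ a, R 0 a = 0 := by intro a; simp [hR]
  have hσ_nonneg : ∀ t a, 0 ≤ σ t a := by
    intro t a
    rw [hσ]
    split
    · exact div_nonneg (le_max_right _ _) (le_of_lt (by assumption))
    · positivity
  have hσ_sum : ∀ t, ∑ a, σ t a = 1 := by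
    intro t
    by_cases h : 0 < ∑ b, max (R t b) 0
    · simp only [hσ, if_pos h]
      rw [← Finset.sum_div]
      exact div_self (ne_of_gt h)
    · simp only [hσ, if_neg h]
      rw [Finset.sum_const, Finset.card_univ, Fintype.card_fin, nsmul_eq_mul]
      field_simp
  have hdot : ∀ t, ∑ a, σ t a * r t a = 0 := by
    intro t
    have : ∑ a, σ t a * r t a
        = (∑ a, σ t a * u t a) - (∑ a, σ t a) * (∑ b, σ t b * u t b) := by
      rw [Finset.sum_mul]
      rw [← Finset.sum_sub_distrib]
      exact Finset.sum_congr rfl fun a _ => by simp [hrdef]; ring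
    rw [this, hσ_sum, one_mul, sub_self]
  have hkey : ∀ t, ∑ a, max (R t a) 0 * r t a = 0 := by
    intro t
    by_cases h : 0 < ∑ b, max (R t b) 0
    · have hm : ∀ a, max (R t a) 0 = σ t a * (∑ b, max (R t b) 0) := by
        intro a
        rw [hσ, if_pos h]
        field_simp
      calc ∑ a, max (R t a) 0 * r t a
          = ∑ a, (∑ b, max (R t b) 0) * (σ t a * r t a) := by
            exact Finset.sum_congr rfl fun a _ => by rw [hm a]; ring
        _ = (∑ b, max (R t b) 0) * ∑ a, σ t a * r t a := by rw [Finset.mul_sum]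
        _ = 0 := by rw [hdot t, mul_zero]
    · have h0 : ∀ a ∈ Finset.univ, max (R t a) 0 = 0 := by
        rw [← Finset.sum_eq_zero_iff_of_nonneg (fun a _ => le_max_right (R t a) 0)]
        exact le_antisymm (not_lt.mp h) (Finset.sum_nonneg fun a _ => le_max_right _ _)
      exact Finset.sum_eq_zero fun a ha => by rw [h0 a ha, zero_mul]
  have hrabs : ∀ t a, |r t a| ≤ Δ := by
    intro t a
    have hre : r t a = ∑ b, σ t b * (u t a - u t b) := by
      simp only [hrdef]
      rw [show ∀ x : Fin n → ℝ, (∑ b, σ t b * (u t a - x b))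
          = (∑ b, σ t b) * u t a - ∑ b, σ t b * x b from fun x => by
        rw [Finset.sum_mul, ← Finset.sum_sub_distrib]
        exact Finset.sum_congr rfl fun b _ => by ring]
      rw [hσ_sum, one_mul]
    rw [hre]
    calc |∑ b, σ t b * (u t a - u t b)| ≤ ∑ b, |σ t b * (u t a - u t b)| :=
          Finset.abs_sum_le_sum_abs _ _
      _ ≤ ∑ b, σ t b * Δ := by
          refine Finset.sum_le_sum fun b _ => ?_
          rw [abs_mul, abs_of_nonneg (hσ_nonneg t b)]
          exact mul_le_mul_of_nonneg_left
            (abs_le.mpr ⟨by linarith [hu t b a], hu t a b⟩) (hσ_nonneg t b)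
      _ = Δ := by rw [← Finset.sum_mul, hσ_sum, one_mul]
  have hr2 : ∀ t, ∑ a, (r t a) ^ 2 ≤ c := by
    intro t
    calc ∑ a, (r t a) ^ 2 ≤ ∑ _a : Fin n, Δ ^ 2 := by
          refine Finset.sum_le_sum fun a _ => ?_
          have := hrabs t a
          nlinarith [abs_nonneg (r t a), neg_abs_le (r t a), le_abs_self (r t a)]
      _ = c := by rw [Finset.sum_const, Finset.card_univ, Fintype.card_fin, nsmul_eq_mul, hc]
  have hΦstep : ∀ t, ∑ a, (max (R (t + 1) a) 0) ^ 2 ≤ (∑ a, (max (R t a) 0) ^ 2) + c := by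
    intro t
    have h1 : ∀ a, (max (R (t + 1) a) 0) ^ 2
        ≤ (max (R t a) 0) ^ 2 + 2 * (max (R t a) 0 * r t a) + (r t a) ^ 2 := by
      intro a
      rw [hRsucc]
      set x := R t a
      set y := r t a
      have key : (max (x + y) 0) ^ 2 ≤ (max x 0 + y) ^ 2 := by
        rcases le_or_gt (x + y) 0 with h | h
        · rw [max_eq_right h]
          simpa using sq_nonneg (max x 0 + y)
        · rw [max_eq_left h.le]
          have h2 : x + y ≤ max x 0 + y := by linarith [le_max_left x 0]
          nlinarith
      nlinarith [key]
    calc ∑ a, (max (R (t + 1) a) 0) ^ 2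
        ≤ ∑ a, ((max (R t a) 0) ^ 2 + 2 * (max (R t a) 0 * r t a) + (r t a) ^ 2) :=
          Finset.sum_le_sum fun a _ => h1 a
      _ = (∑ a, (max (R t a) 0) ^ 2) + 2 * (∑ a, max (R t a) 0 * r t a)
            + ∑ a, (r t a) ^ 2 := by
          rw [Finset.sum_add_distrib, Finset.sum_add_distrib, Finset.mul_sum]
      _ = (∑ a, (max (R t a) 0) ^ 2) + ∑ a, (r t a) ^ 2 := by rw [hkey t]; ring
      _ ≤ (∑ a, (max (R t a) 0) ^ 2) + c := by linarith [hr2 t]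
  have hΦ : ∀ T : ℕ, ∑ a, (max (R T a) 0) ^ 2 ≤ T * c := by
    intro T
    induction T with
    | zero => simp [hR0]
    | succ t ih =>
      calc ∑ a, (max (R (t + 1) a) 0) ^ 2 ≤ (∑ a, (max (R t a) 0) ^ 2) + c := hΦstep t
        _ ≤ t * c + c := by linarith
        _ = (t + 1 : ℕ) * c := by push_cast; ring
  have hsup_le : ∀ (T : ℕ) (a : Fin n), R T a ≤ Real.sqrt (T * c) := by
    intro T a
    have h1 : (max (R T a) 0) ^ 2 ≤ T * c :=
      le_trans (Finset.single_le_sum (fun b _ => sq_nonneg (max (R T b) 0))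
        (Finset.mem_univ a)) (hΦ T)
    have h2 : max (R T a) 0 ≤ Real.sqrt (T * c) := by
      rw [← Real.sqrt_sq (le_max_right (R T a) 0)]
      exact Real.sqrt_le_sqrt h1
    exact le_trans (le_max_left _ _) h2
  -- the invariant: either some cumulative regret is positive, or all are zero
  have hinv : ∀ T : ℕ, (∃ a, 0 < R T a) ∨ (∀ a, R T a = 0) := by
    intro T
    induction T with
    | zero => exact Or.inr hR0
    | succ t ih =>
      rcases ih with ⟨a₀, ha₀⟩ | hz
      · left
        by_contra hcon
        push_neg at hcon
        have hterm : ∀ a, max (R t a) 0 * r t a ≤ -(max (R t a) 0) ^ 2 := by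
          intro a
          rcases le_or_gt (R t a) 0 with h | h
          · rw [max_eq_right h]; simp
          · rw [max_eq_left h.le]
            have h2 := hcon a
            rw [hRsucc] at h2
            nlinarith
        have hs : ∑ a, max (R t a) 0 * r t a ≤ -∑ a, (max (R t a) 0) ^ 2 := by
          rw [← Finset.sum_neg_distrib]
          exact Finset.sum_le_sum fun a _ => hterm a
        have h3 : (max (R t a₀) 0) ^ 2 ≤ ∑ a, (max (R t a) 0) ^ 2 :=
          Finset.single_le_sum (f := fun b => (max (R t b) 0) ^ 2)
            (fun b _ => sq_nonneg _) (Finset.mem_univ a₀)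
        have h4 : 0 < (max (R t a₀) 0) ^ 2 := by
          rw [max_eq_left ha₀.le]; positivity
        linarith [hkey t]
      · by_cases hex : ∃ a, 0 < R (t + 1) a
        · exact Or.inl hex
        · right
          push_neg at hex
          have hsum0 : ∑ b, max (R t b) 0 = 0 := by
            refine Finset.sum_eq_zero fun b _ => ?_
            rw [hz b]; simp
          have hσu : ∀ a, σ t a = 1 / n := by
            intro a
            rw [hσ, if_neg (by rw [hsum0]; exact lt_irrefl 0)]
          have hrsum : ∑ a, r t a = 0 := by
            have h5 := hdot t
            simp only [hσu] at h5
            rw [← Finset.mul_sum] at h5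
            have hne : (1:ℝ) / n ≠ 0 := by positivity
            exact (mul_eq_zero.mp h5).resolve_left hne
          have hsum' : ∑ a, R (t + 1) a = 0 := by
            calc ∑ a, R (t + 1) a = ∑ a, (R t a + r t a) :=
                Finset.sum_congr rfl fun a _ => hRsucc t a
              _ = (∑ a, R t a) + ∑ a, r t a := Finset.sum_add_distrib
              _ = 0 := by
                  rw [hrsum, Finset.sum_eq_zero fun a _ => hz a, add_zero]
          intro a
          exact (Finset.sum_eq_zero_iff_of_nonpos fun b _ => hex b).mp hsum' a
            (Finset.mem_univ a)
  have hbdd : ∀ T : ℕ, BddAbove (Set.range (R T)) := fun T =>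
    Set.Finite.bddAbove (Set.finite_range _)
  have hPos : ∀ T : ℕ, 0 ≤ ⨆ a, R T a := by
    intro T
    rcases hinv T with ⟨a, ha⟩ | hz
    · exact le_trans ha.le (le_ciSup (hbdd T) a)
    · exact le_trans (hz ⟨0, by omega⟩).ge (le_ciSup (hbdd T) ⟨0, by omega⟩)
  have hSup_le : ∀ T : ℕ, (⨆ a, R T a) ≤ Real.sqrt (T * c) := fun T =>
    ciSup_le fun a => hsup_le T a
  -- the upper bound tends to zero
  have hsqrtn : Filter.Tendsto (fun T : ℕ => Real.sqrt T) Filter.atTop Filter.atTop := by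
    refine Filter.tendsto_atTop_atTop.mpr fun b => ⟨⌈(b ^ 2 : ℝ)⌉₊ + 1, fun m hm => ?_⟩
    have h1 : (b ^ 2 : ℝ) ≤ m := by
      calc (b ^ 2 : ℝ) ≤ ⌈(b ^ 2 : ℝ)⌉₊ := Nat.le_ceil _
        _ ≤ m := by exact_mod_cast Nat.le_of_succ_le hm
    calc b ≤ |b| := le_abs_self b
      _ = Real.sqrt (b ^ 2) := (Real.sqrt_sq_eq_abs b).symm
      _ ≤ Real.sqrt m := Real.sqrt_le_sqrt h1
  have hub : Filter.Tendsto (fun T : ℕ => Real.sqrt ((T : ℝ) * c) / T)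
      Filter.atTop (nhds 0) := by
    have heq : (fun T : ℕ => Real.sqrt ((T : ℝ) * c) / T)
        =ᶠ[Filter.atTop] (fun T : ℕ => Real.sqrt c / Real.sqrt T) := by
      filter_upwards [Filter.eventually_ge_atTop 1] with T hT
      have hT0 : (0:ℝ) < T := by exact_mod_cast hT
      have hs0 : (0:ℝ) < Real.sqrt T := Real.sqrt_pos.mpr hT0
      have hss : Real.sqrt T * Real.sqrt T = (T : ℝ) := Real.mul_self_sqrt hT0.le
      rw [Real.sqrt_mul (le_of_lt hT0), div_eq_div_iff hT0.ne' hs0.ne']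
      linear_combination Real.sqrt c * hss
    refine Filter.Tendsto.congr' heq.symm ?_
    exact Filter.Tendsto.div_atTop tendsto_const_nhds hsqrtn
  refine squeeze_zero (fun T => div_nonneg (hPos T) (Nat.cast_nonneg T)) (fun T => ?_) hub
  rcases Nat.eq_zero_or_pos T with hT | hT
  · subst hT; simp
  · have hT0 : (0:ℝ) < T := by exact_mod_cast hT
    exact div_le_div_of_nonneg_right (hSup_le T) hT0.le
end
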